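/- Suppose T is a distribution on gl(n,ℝ) (or more simply, a C¹ function) satisfying L_{ij} T = 0 for 1 ≤ i ≤ n-1, 1 ≤ j ≤ n. Then for each 1 ≤ j ≤ n, the product D · (L_{nj} T) = 0, where D is the polynomial D(x) = det(rows e_n x^k, k = 0,…,n-1). Consequently L_{nj}T vanishes on Ω = {D ≠ 0}. -/

import Mathlib

/-!
Fix `x`. The map `ψ : A ↦ dT_x (A x - x A)` is a linear functional on matrices with
`ψ (E i j) = (L_{ij} T)(x)`, and it kills every power `x ^ k` because `x ^ k` commutes with `x`.
Expanding `x ^ k` in the matrix units and using `L_{ij} T = 0` for `i ≠ n` leaves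
`∑ j, (x ^ k) n j * (L_{nj} T)(x) = 0` for all `k`: the vector `((L_{nj} T)(x))_j` lies in the
kernel of the matrix with rows `e_n x ^ k`, whose determinant is `D(x)`. Multiplying by the
adjugate gives `D(x) • ((L_{nj} T)(x))_j = 0`.
-/

attribute [local instance] Matrix.frobeniusNormedAddCommGroup Matrix.frobeniusNormedSpace

noncomputable def Dmat (n : ℕ) (x : Matrix (Fin (n+1)) (Fin (n+1)) ℝ) : ℝ :=
  (Matrix.of fun k j : Fin (n+1) =>
    Matrix.vecMul (Pi.single (Fin.last n) 1) (x ^ (k : ℕ)) j).det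

/-- Derivative of `T` along the adjoint vector field `x ↦ [E i j, x]`. -/
noncomputable def Lop (n : ℕ) (i j : Fin (n+1))
    (T : Matrix (Fin (n+1)) (Fin (n+1)) ℝ → ℝ)
    (x : Matrix (Fin (n+1)) (Fin (n+1)) ℝ) : ℝ :=
  deriv (fun t : ℝ => T (x + t • (Matrix.single i j (1:ℝ) * x
    - x * Matrix.single i j (1:ℝ)))) 0

open Matrix

section

variable {R : Type*} [CommRing R]

theorem Matrix.det_smul_eq_zero_of_mulVec_eq_zero {ι : Type*} [Fintype ι] [DecidableEq ι]
    {M : Matrix ι ι R} {v : ι → R} (h : M *ᵥ v = 0) : M.det • v = 0 := by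
  rw [← one_mulVec v, ← smul_mulVec, ← adjugate_mul, ← mulVec_mulVec, h, mulVec_zero]

theorem LinearMap.apply_eq_sum_row_of_apply_single_eq_zero {ι N : Type*} [Fintype ι]
    [DecidableEq ι] [AddCommMonoid N] [Module R N] (ψ : Matrix ι ι R →ₗ[R] N) (r : ι)
    (hψ : ∀ i j, i ≠ r → ψ (Matrix.single i j 1) = 0) (A : Matrix ι ι R) :
    ψ A = ∑ j, A r j • ψ (Matrix.single r j 1) := by
  have hsingle : ∀ i j, ψ (Matrix.single i j (A i j)) = A i j • ψ (Matrix.single i j 1) :=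
    fun i j => by rw [← map_smul, smul_single, smul_eq_mul, mul_one]
  conv_lhs => rw [matrix_eq_sum_single A]
  simp only [map_sum, hsingle]
  exact Finset.sum_eq_single r (fun i _ hi => Finset.sum_eq_zero fun j _ => by
    rw [hψ i j hi, smul_zero]) (by simp)

def Matrix.powRows {m : ℕ} (x : Matrix (Fin m) (Fin m) R) (r : Fin m) :
    Matrix (Fin m) (Fin m) R :=
  of fun k l => (x ^ (k : ℕ)) r l

theorem Matrix.det_powRows_mul_eq_zero {m : ℕ} (ψ : Matrix (Fin m) (Fin m) R →ₗ[R] R)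
    (x : Matrix (Fin m) (Fin m) R) (r : Fin m) (hpow : ∀ k : ℕ, ψ (x ^ k) = 0)
    (hrow : ∀ i j, i ≠ r → ψ (Matrix.single i j 1) = 0) (j : Fin m) :
    (x.powRows r).det * ψ (Matrix.single r j 1) = 0 := by
  have hker : x.powRows r *ᵥ (fun l => ψ (Matrix.single r l 1)) = 0 := by
    funext k
    rw [Pi.zero_apply, ← hpow k, ψ.apply_eq_sum_row_of_apply_single_eq_zero r hrow]
    rfl
  exact congrFun (det_smul_eq_zero_of_mulVec_eq_zero hker) j

end

theorem Dmat_eq_det_powRows (n : ℕ) (x : Matrix (Fin (n+1)) (Fin (n+1)) ℝ) :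
    Dmat n x = (x.powRows (Fin.last n)).det := by
  simp only [Dmat, single_one_vecMul, row]
  rfl

theorem Lop_eq_fderiv_commutator (n : ℕ) (i j : Fin (n+1))
    {T : Matrix (Fin (n+1)) (Fin (n+1)) ℝ → ℝ} {x : Matrix (Fin (n+1)) (Fin (n+1)) ℝ}
    (hT : DifferentiableAt ℝ T x) :
    Lop n i j T x = fderiv ℝ T x (single i j 1 * x - x * single i j 1) :=
  hT.lineDeriv_eq_fderiv

theorem D_mul_LnjT_eq_zero (n : ℕ)
    (T : Matrix (Fin (n+1)) (Fin (n+1)) ℝ → ℝ) (hT : ContDiff ℝ 1 T)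
    (hP : ∀ i j : Fin (n+1), i ≠ Fin.last n →
      ∀ x : Matrix (Fin (n+1)) (Fin (n+1)) ℝ, Lop n i j T x = 0) :
    (∀ j : Fin (n+1), ∀ x : Matrix (Fin (n+1)) (Fin (n+1)) ℝ,
      Dmat n x * Lop n (Fin.last n) j T x = 0) ∧
    ∀ j : Fin (n+1), ∀ x : Matrix (Fin (n+1)) (Fin (n+1)) ℝ,
      Dmat n x ≠ 0 → Lop n (Fin.last n) j T x = 0 := by
  have hD : ∀ j x, Dmat n x * Lop n (Fin.last n) j T x = 0 := by
    intro j x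
    have hTx : DifferentiableAt ℝ T x := hT.differentiable one_ne_zero x
    let ψ := (fderiv ℝ T x).toLinearMap ∘ₗ (LinearMap.mulRight ℝ x - LinearMap.mulLeft ℝ x)
    have hψ : ∀ i j, ψ (single i j 1) = Lop n i j T x := fun i j =>
      (Lop_eq_fderiv_commutator n i j hTx).symm
    have hpow : ∀ k : ℕ, ψ (x ^ k) = 0 := fun k => by
      simp [ψ, ((Commute.refl x).pow_left k).eq]
    rw [Dmat_eq_det_powRows, ← hψ]
    exact det_powRows_mul_eq_zero ψ x _ hpow (fun i j hi => (hψ i j).trans (hP i j hi x)) j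
  exact ⟨hD, fun j x hx => (mul_eq_zero.mp (hD j x)).resolve_left hx⟩
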